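/- For every natural number N, the vector v ∈ ℝ^{N+1} with components v_n = sin((n+1)π/(N+2)), n = 0,…,N, is nonzero and is an eigenvector of the (N+1)×(N+1) tridiagonal matrix M̃_{N+1} with eigenvalue 2cos(π/(N+2)): M̃_{N+1} v = 2cos(π/(N+2))·v. Moreover 2cos(π/(N+2)) is the largest eigenvalue: every real eigenvalue λ of M̃_{N+1} satisfies λ ≤ 2cos(π/(N+2)). Consequently the maximum average fidelity of phase alignment with at most N photons is f̄_max = (1/2)(1 + cos(π/(N+2))). -/

import Mathlib

/-- The k×k tridiagonal matrix with entries 1 exactly when |a−b| = 1. -/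
def tridiag (k : ℕ) : Matrix (Fin k) (Fin k) ℝ :=
  Matrix.of fun a b : Fin k =>
    if (a : ℕ) + 1 = (b : ℕ) ∨ (b : ℕ) + 1 = (a : ℕ) then (1 : ℝ) else 0

/-- The vector v_n = sin((n+1)π/(N+2)), n = 0, …, N. -/
noncomputable def sineVec (N : ℕ) : Fin (N + 1) → ℝ := fun n =>
  Real.sin ((((n : ℕ) : ℝ) + 1) * Real.pi / ((N : ℝ) + 2))

/-!
The sine vector is positive, and it is an eigenvector because
`sin (nθ) + sin ((n + 2)θ) = 2 cos θ · sin ((n + 1)θ)`, with `θ = π/(N+2)` chosen so that the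
extended sequence `sin (nθ)` vanishes at both ends `n = 0` and `n = N + 2`. Maximality is the
Perron–Frobenius bound: if `M ≥ 0` entrywise has a positive left eigenvector `v` for `μ` and
`M w = λ w`, then `|λ| |w| ≤ M |w|` entrywise, and pairing with `v` gives `|λ| ≤ μ`.
-/

open Matrix

theorem abs_le_of_pos_left_eigenvector {n : Type*} [Fintype n] {M : Matrix n n ℝ}
    (hM : ∀ i j, 0 ≤ M i j) {v : n → ℝ} (hv : ∀ i, 0 < v i) {μ : ℝ} (hvM : v ᵥ* M = μ • v)
    {w : n → ℝ} (hw : w ≠ 0) {lam : ℝ} (hMw : M *ᵥ w = lam • w) : |lam| ≤ μ := by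
  have hpoint : |lam| • |w| ≤ M *ᵥ |w| := fun i => by
    calc |lam| * |w i| = |(M *ᵥ w) i| := by rw [hMw, Pi.smul_apply, smul_eq_mul, abs_mul]
      _ ≤ ∑ j, |M i j * w j| := Finset.abs_sum_le_sum_abs _ _
      _ = (M *ᵥ |w|) i := by simp only [abs_mul, abs_of_nonneg (hM i _)]; rfl
  have hpos : 0 < v ⬝ᵥ |w| := by
    obtain ⟨i, hi⟩ := Function.ne_iff.mp hw
    exact Finset.sum_pos' (fun j _ => mul_nonneg (hv j).le (abs_nonneg _))
      ⟨i, Finset.mem_univ _, mul_pos (hv i) (abs_pos.mpr hi)⟩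
  have key : |lam| * (v ⬝ᵥ |w|) ≤ μ * (v ⬝ᵥ |w|) :=
    calc |lam| * (v ⬝ᵥ |w|) = v ⬝ᵥ (|lam| • |w|) := by rw [dotProduct_smul, smul_eq_mul]
      _ ≤ v ⬝ᵥ (M *ᵥ |w|) := dotProduct_le_dotProduct_of_nonneg_left hpoint fun i => (hv i).le
      _ = μ * (v ⬝ᵥ |w|) := by rw [dotProduct_mulVec, hvM, smul_dotProduct, smul_eq_mul]
  exact le_of_mul_le_mul_right key hpos

theorem tridiag_transpose (k : ℕ) : (tridiag k)ᵀ = tridiag k := by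
  ext a b
  simp [tridiag, or_comm]

theorem tridiag_nonneg {k : ℕ} (a b : Fin k) : 0 ≤ tridiag k a b := by
  simp only [tridiag, of_apply]
  split_ifs <;> norm_num

theorem tridiag_mulVec_of_boundary_zero {k : ℕ} {u : ℕ → ℝ} (h0 : u 0 = 0) (hk : u (k + 1) = 0)
    (a : Fin k) : (tridiag k *ᵥ fun b => u (b + 1)) a = u a + u (a + 2) := by
  obtain ⟨a, ha⟩ := a
  simp only [mulVec, dotProduct, tridiag, of_apply, ite_mul, one_mul, zero_mul]
  rw [Fin.sum_univ_eq_sum_range (fun b => if a + 1 = b ∨ b + 1 = a then u (b + 1) else 0)]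
  have hsplit : ∀ b : ℕ, (if a + 1 = b ∨ b + 1 = a then u (b + 1) else 0)
      = (if a + 1 = b then u (b + 1) else 0) + (if b + 1 = a then u a else 0) := by
    intro b
    split_ifs <;> first | omega | simp_all
  simp only [hsplit, Finset.sum_add_distrib, Finset.sum_ite_eq, Finset.mem_range]
  rw [add_comm]
  congr 1
  · rcases a with _ | c
    · simp [h0]
    · simp [ha.trans' (Nat.lt_succ_self c)]
  · split_ifs with h
    · rfl
    · rw [show a + 2 = k + 1 by omega, hk]

theorem sineVec_pos (N : ℕ) (a : Fin (N + 1)) : 0 < sineVec N a := by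
  have ha : ((a : ℕ) : ℝ) + 1 < (N : ℝ) + 2 := by
    have : ((a : ℕ) : ℝ) < N + 1 := by exact_mod_cast a.isLt
    linarith
  apply Real.sin_pos_of_pos_of_lt_pi
  · positivity
  · rw [div_lt_iff₀ (by positivity)]
    nlinarith [Real.pi_pos]

theorem Real.sin_add_sin_add_two_mul (x θ : ℝ) :
    Real.sin x + Real.sin (x + 2 * θ) = 2 * Real.cos θ * Real.sin (x + θ) := by
  rw [Real.sin_add_sin, ← Real.cos_neg]
  ring_nf

theorem sineVec_eq_sin_nat_mul (N : ℕ) :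
    sineVec N = fun b : Fin (N + 1) =>
      Real.sin ((((b : ℕ) + 1 : ℕ) : ℝ) * (Real.pi / ((N : ℝ) + 2))) := by
  funext b
  simp only [sineVec, Nat.cast_add, Nat.cast_one, mul_div_assoc]

theorem tridiag_mulVec_sineVec (N : ℕ) :
    tridiag (N + 1) *ᵥ sineVec N = (2 * Real.cos (Real.pi / ((N : ℝ) + 2))) • sineVec N := by
  set θ := Real.pi / ((N : ℝ) + 2)
  have hend : Real.sin (((N + 1 + 1 : ℕ) : ℝ) * θ) = 0 := by
    rw [← Real.sin_pi]
    congr 1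
    simp only [θ]
    push_cast
    field_simp
    ring
  ext a
  rw [sineVec_eq_sin_nat_mul, tridiag_mulVec_of_boundary_zero (u := fun n : ℕ => Real.sin (n * θ))
    (by simp) hend, Pi.smul_apply, smul_eq_mul]
  convert Real.sin_add_sin_add_two_mul ((a : ℕ) * θ) θ using 3 <;> push_cast <;> ring

theorem tridiag_top_eigenvector_and_max_fidelity (N : ℕ) :
    sineVec N ≠ 0
    ∧ (tridiag (N + 1)).mulVec (sineVec N)
        = (2 * Real.cos (Real.pi / ((N : ℝ) + 2))) • sineVec N
    ∧ (∀ lam : ℝ, (∃ w : Fin (N + 1) → ℝ, w ≠ 0 ∧ (tridiag (N + 1)).mulVec w = lam • w) →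
        lam ≤ 2 * Real.cos (Real.pi / ((N : ℝ) + 2)))
    ∧ (1 / 2 : ℝ) + (2 * Real.cos (Real.pi / ((N : ℝ) + 2))) / 4
        = (1 / 2) * (1 + Real.cos (Real.pi / ((N : ℝ) + 2))) := by
  have hleft : sineVec N ᵥ* tridiag (N + 1)
      = (2 * Real.cos (Real.pi / ((N : ℝ) + 2))) • sineVec N := by
    rw [← mulVec_transpose, tridiag_transpose, tridiag_mulVec_sineVec]
  refine ⟨fun h => (sineVec_pos N 0).ne' (congrFun h 0), tridiag_mulVec_sineVec N, ?_, by ring⟩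
  rintro lam ⟨w, hw, hMw⟩
  exact (le_abs_self lam).trans
    (abs_le_of_pos_left_eigenvector tridiag_nonneg (sineVec_pos N) hleft hw hMw)
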